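/- Let n, t ≥ 1, let M̂ : [n]^{2t} → ℝ be nonnegative and symmetric under swapping its first t and last t indices (M̂(I,J) = M̂(J,I) for I,J ∈ [n]^t), let M(x) = Σ_{i₁,…,i_{2t}} M̂(i₁,…,i_{2t})·x_{i₁}⋯x_{i_{2t}}, and let Q be the n^t × n^t symmetric matrix with entries Q_{I,J} = M̂(I,J), with operator (spectral) norm ‖Q‖. Let 𝒳 be a finitely supported probability distribution on the unit sphere of ℝⁿ, let 𝒜 be the probability distribution on [n]^t given by 𝒜(i₁,…,i_t) = E_{x∼𝒳}[x_{i₁}²⋯x_{i_t}²], and let a be the distribution on [n] given by a(i) = E_{x∼𝒳}[x_i²] (each coordinate marginal of 𝒜 equals a). If the Hellinger distance between 𝒜 and the t-fold product a^{⊗t} is at most ε, then the unit vector x* ∈ ℝⁿ defined by x*_i = (E_{x∼𝒳}[x_i²])^{1/2} satisfies M(x*) ≥ E_{x∼𝒳}[M(x)] − 4ε‖Q‖. -/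

import Mathlib

/-!
Write `A` for the distribution `𝒜` and `B` for `a^{⊗t}`, and let `√A`, `√B` be the
corresponding unit vectors of `ℝ^{[n]^t}`. Cauchy–Schwarz in `ω` and `M̂ ≥ 0` give
`E[M(x)] ≤ ⟨√A, Q √A⟩`, while `M(x*) = ⟨√B, Q √B⟩`. The squared Hellinger distance is half the
squared Euclidean distance `‖√A - √B‖²`, so `‖√A - √B‖ ≤ √2 ε`, and moving a unit vector by `δ`
changes the quadratic form of `Q` by at most `2δ‖Q‖`.
-/

open Finset RealInnerProductSpace

section SqrtVec

variable {ι : Type*} [Fintype ι]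

noncomputable def sqrtVec (p : ι → ℝ) : EuclideanSpace ℝ ι :=
  WithLp.toLp 2 fun i => √(p i)

noncomputable def hellinger (p q : ι → ℝ) : ℝ :=
  √(1 - ∑ i, √(p i * q i))

lemma inner_sqrtVec {p : ι → ℝ} (hp : ∀ i, 0 ≤ p i) (q : ι → ℝ) :
    ⟪sqrtVec p, sqrtVec q⟫ = ∑ i, √(p i * q i) := by
  simp only [sqrtVec, PiLp.inner_apply, RCLike.inner_apply, conj_trivial]
  exact sum_congr rfl fun i _ => by rw [Real.sqrt_mul (hp i), mul_comm]

lemma norm_sqrtVec {p : ι → ℝ} (hp : ∀ i, 0 ≤ p i) : ‖sqrtVec p‖ = √(∑ i, p i) := by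
  rw [EuclideanSpace.norm_eq]
  exact congrArg _ (sum_congr rfl fun i _ => by simp [sqrtVec, Real.sq_sqrt (hp i)])

lemma norm_sqrtVec_sub_sqrtVec {p q : ι → ℝ} (hp : ∀ i, 0 ≤ p i) (hq : ∀ i, 0 ≤ q i)
    (hp1 : ∑ i, p i = 1) (hq1 : ∑ i, q i = 1) :
    ‖sqrtVec p - sqrtVec q‖ = √2 * hellinger p q := by
  have hsq : ‖sqrtVec p - sqrtVec q‖ ^ 2 = 2 * (1 - ∑ i, √(p i * q i)) := by
    rw [norm_sub_sq_real, norm_sqrtVec hp, norm_sqrtVec hq, hp1, hq1, inner_sqrtVec hp,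
      Real.sqrt_one]
    ring
  rw [hellinger, ← Real.sqrt_mul zero_le_two, ← hsq, Real.sqrt_sq (norm_nonneg _)]

end SqrtVec

lemma Matrix.inner_toEuclideanCLM_toLp {ι : Type*} [Fintype ι] [DecidableEq ι] (Q : Matrix ι ι ℝ)
    (f g : ι → ℝ) :
    ⟪WithLp.toLp 2 f, Matrix.toEuclideanCLM (𝕜 := ℝ) Q (WithLp.toLp 2 g)⟫
      = ∑ p : ι × ι, Q p.1 p.2 * (f p.1 * g p.2) := by
  rw [Matrix.inner_toEuclideanCLM, Fintype.sum_prod_type]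
  simp only [dotProduct, Matrix.mulVec, mul_sum]
  exact sum_congr rfl fun i _ => sum_congr rfl fun j _ => by ring

lemma inner_map_self_sub_inner_map_self_le {E : Type*} [NormedAddCommGroup E]
    [InnerProductSpace ℝ E] (T : E →L[ℝ] E) (s v : E) :
    ⟪s, T s⟫ - ⟪v, T v⟫ ≤ ‖T‖ * ‖s - v‖ * (‖s‖ + ‖v‖) := by
  have hsplit : ⟪s, T s⟫ - ⟪v, T v⟫ = ⟪s - v, T s⟫ + ⟪v, T (s - v)⟫ := by
    rw [inner_sub_left, map_sub, inner_sub_right]; ring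
  have h₁ : ⟪s - v, T s⟫ ≤ ‖s - v‖ * (‖T‖ * ‖s‖) :=
    (real_inner_le_norm _ _).trans (mul_le_mul_of_nonneg_left (T.le_opNorm s) (norm_nonneg _))
  have h₂ : ⟪v, T (s - v)⟫ ≤ ‖v‖ * (‖T‖ * ‖s - v‖) :=
    (real_inner_le_norm _ _).trans (mul_le_mul_of_nonneg_left (T.le_opNorm _) (norm_nonneg _))
  linarith

section Weighted

variable {Ω : Type*} [Fintype Ω] {w : Ω → ℝ}

lemma sum_sum_mul_eq_one {ι : Type*} [Fintype ι] (hw1 : ∑ ω, w ω = 1) {f : Ω → ι → ℝ}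
    (hf : ∀ ω, ∑ i, f ω i = 1) : ∑ i, ∑ ω, w ω * f ω i = 1 := by
  rw [sum_comm]
  simp only [← mul_sum, hf, mul_one, hw1]

lemma sum_mul_mul_le_sqrt_mul_sqrt (hw : ∀ ω, 0 ≤ w ω) (f g : Ω → ℝ) :
    ∑ ω, w ω * (f ω * g ω) ≤ √(∑ ω, w ω * f ω ^ 2) * √(∑ ω, w ω * g ω ^ 2) := by
  have hsq : ∀ h : Ω → ℝ, ∀ ω, (√(w ω) * h ω) ^ 2 = w ω * h ω ^ 2 := fun h ω => by
    rw [mul_pow, Real.sq_sqrt (hw ω)]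
  have hprod : ∀ ω, (√(w ω) * f ω) * (√(w ω) * g ω) = w ω * (f ω * g ω) := fun ω => by
    rw [mul_mul_mul_comm, Real.mul_self_sqrt (hw ω)]
  simpa only [hsq, hprod] using
    Real.sum_mul_le_sqrt_mul_sqrt univ (fun ω => √(w ω) * f ω) (fun ω => √(w ω) * g ω)

lemma sum_mul_sum_mul_mul_le {ι : Type*} [Fintype ι] (hw : ∀ ω, 0 ≤ w ω) {K : ι × ι → ℝ}
    (hK : ∀ p, 0 ≤ K p) (u : Ω → ι → ℝ) :
    ∑ ω, w ω * ∑ p, K p * (u ω p.1 * u ω p.2)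
      ≤ ∑ p, K p * (√(∑ ω, w ω * u ω p.1 ^ 2) * √(∑ ω, w ω * u ω p.2 ^ 2)) := by
  calc ∑ ω, w ω * ∑ p, K p * (u ω p.1 * u ω p.2)
      = ∑ p, K p * ∑ ω, w ω * (u ω p.1 * u ω p.2) := by
        simp only [mul_sum]
        rw [sum_comm]
        exact sum_congr rfl fun p _ => sum_congr rfl fun ω _ => by ring
    _ ≤ _ := sum_le_sum fun p _ =>
        mul_le_mul_of_nonneg_left (sum_mul_mul_le_sqrt_mul_sqrt hw _ _) (hK p)

end Weighted

theorem direct_rounding_general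
    (n t : ℕ)
    (Mhat : ((Fin t → Fin n) × (Fin t → Fin n)) → ℝ)
    (hMnonneg : ∀ p, 0 ≤ Mhat p)
    (Q : Matrix (Fin t → Fin n) (Fin t → Fin n) ℝ)
    (hQ : ∀ I J, Q I J = Mhat (I, J))
    (Ω : Type) [Fintype Ω]
    (w : Ω → ℝ) (hw : ∀ ω, 0 ≤ w ω) (hw1 : ∑ ω, w ω = 1)
    (x : Ω → Fin n → ℝ) (hx : ∀ ω, ∑ i, x ω i ^ 2 = 1)
    (ε : ℝ)
    (hhell :
      Real.sqrt (1 - ∑ I : Fin t → Fin n,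
        Real.sqrt ((∑ ω, w ω * ∏ i, x ω (I i) ^ 2) *
          ∏ i, (∑ ω, w ω * x ω (I i) ^ 2))) ≤ ε) :
    ∑ p : (Fin t → Fin n) × (Fin t → Fin n),
        Mhat p * ((∏ i, Real.sqrt (∑ ω, w ω * x ω (p.1 i) ^ 2)) *
          ∏ i, Real.sqrt (∑ ω, w ω * x ω (p.2 i) ^ 2))
      ≥ (∑ ω, w ω * ∑ p : (Fin t → Fin n) × (Fin t → Fin n),
            Mhat p * ((∏ i, x ω (p.1 i)) * ∏ i, x ω (p.2 i)))
        - 4 * ε * ‖Matrix.toEuclideanCLM (𝕜 := ℝ) Q‖ := by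
  set a : Fin n → ℝ := fun i => ∑ ω, w ω * x ω i ^ 2
  set A : (Fin t → Fin n) → ℝ := fun I => ∑ ω, w ω * ∏ i, x ω (I i) ^ 2
  set B : (Fin t → Fin n) → ℝ := fun I => ∏ i, a (I i)
  set T := Matrix.toEuclideanCLM (𝕜 := ℝ) Q
  have ha : ∀ i, 0 ≤ a i := fun i => sum_nonneg fun ω _ => mul_nonneg (hw ω) (sq_nonneg _)
  have hA : ∀ I, 0 ≤ A I := fun I =>
    sum_nonneg fun ω _ => mul_nonneg (hw ω) (prod_nonneg fun i _ => sq_nonneg _)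
  have hB : ∀ I, 0 ≤ B I := fun I => prod_nonneg fun i _ => ha _
  have hA1 : ∑ I, A I = 1 := sum_sum_mul_eq_one hw1 fun ω => by
    rw [← Fintype.sum_pow (fun i => x ω i ^ 2), hx ω, one_pow]
  have hB1 : ∑ I, B I = 1 := by
    rw [← Fintype.sum_pow a, sum_sum_mul_eq_one hw1 hx, one_pow]
  have hdist : ‖sqrtVec A - sqrtVec B‖ ≤ 2 * ε := by
    rw [norm_sqrtVec_sub_sqrtVec hA hB hA1 hB1]
    exact mul_le_mul (by linarith [Real.sqrt_two_lt_three_halves]) hhell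
      (Real.sqrt_nonneg _) zero_le_two
  have hmoment : ∑ ω, w ω * ∑ p : (Fin t → Fin n) × (Fin t → Fin n),
      Mhat p * ((∏ i, x ω (p.1 i)) * ∏ i, x ω (p.2 i)) ≤ ⟪sqrtVec A, T (sqrtVec A)⟫ := by
    rw [sqrtVec, Matrix.inner_toEuclideanCLM_toLp]
    simpa only [hQ, ← prod_pow] using
      sum_mul_sum_mul_mul_le hw hMnonneg fun ω I => ∏ i, x ω (I i)
  have hrounded : ⟪sqrtVec B, T (sqrtVec B)⟫
      = ∑ p : (Fin t → Fin n) × (Fin t → Fin n),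
          Mhat p * ((∏ i, √(a (p.1 i))) * ∏ i, √(a (p.2 i))) := by
    rw [sqrtVec, Matrix.inner_toEuclideanCLM_toLp]
    have hsqrtB : ∀ I, √(B I) = ∏ i, √(a (I i)) := fun I =>
      Real.sqrt_prod _ fun i _ => ha _
    simp only [hQ, hsqrtB]
  have hperturb := inner_map_self_sub_inner_map_self_le T (sqrtVec A) (sqrtVec B)
  rw [norm_sqrtVec hA, norm_sqrtVec hB, hA1, hB1, Real.sqrt_one, hrounded] at hperturb
  linarith [mul_le_mul_of_nonneg_left hdist (norm_nonneg T)]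

/-- **Direct rounding** (Lemma 3.2).
Let `M̂` be nonnegative on `[n]^t × [n]^t` with `M̂(I,J) = M̂(J,I)`, defining the
degree-`2t` polynomial `M(x) = Σ_{I,J} M̂(I,J)·Π x_{Iᵢ}·Π x_{Jᵢ}`, and let `Q` be the
corresponding `n^t × n^t` symmetric matrix with operator norm `‖Q‖`.  Let `𝒳` be a
finitely supported distribution (weights `w` on a finite sample space `Ω`, vectors
`x ω` on the unit sphere of `ℝⁿ`).  If the Hellinger distance between the distribution
`𝒜(I) = E[Π x_{Iᵢ}²]` on `[n]^t` and the `t`-fold product of `a(i) = E[xᵢ²]` is at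
most `ε`, then the unit vector `x*` with `x*ᵢ = √(E[xᵢ²])` satisfies
`M(x*) ≥ E[M(x)] − 4ε‖Q‖`. -/
theorem direct_rounding
    (n t : ℕ) (hn : 1 ≤ n) (ht : 1 ≤ t)
    (Mhat : ((Fin t → Fin n) × (Fin t → Fin n)) → ℝ)
    (hMnonneg : ∀ p, 0 ≤ Mhat p)
    (hMsymm : ∀ I J : Fin t → Fin n, Mhat (I, J) = Mhat (J, I))
    (Q : Matrix (Fin t → Fin n) (Fin t → Fin n) ℝ)
    (hQ : ∀ I J, Q I J = Mhat (I, J))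
    (Ω : Type) [Fintype Ω]
    (w : Ω → ℝ) (hw : ∀ ω, 0 ≤ w ω) (hw1 : ∑ ω, w ω = 1)
    (x : Ω → Fin n → ℝ) (hx : ∀ ω, ∑ i, x ω i ^ 2 = 1)
    (ε : ℝ)
    (hhell :
      Real.sqrt (1 - ∑ I : Fin t → Fin n,
        Real.sqrt ((∑ ω, w ω * ∏ i, x ω (I i) ^ 2) *
          ∏ i, (∑ ω, w ω * x ω (I i) ^ 2))) ≤ ε) :
    ∑ p : (Fin t → Fin n) × (Fin t → Fin n),
        Mhat p * ((∏ i, Real.sqrt (∑ ω, w ω * x ω (p.1 i) ^ 2)) *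
          ∏ i, Real.sqrt (∑ ω, w ω * x ω (p.2 i) ^ 2))
      ≥ (∑ ω, w ω * ∑ p : (Fin t → Fin n) × (Fin t → Fin n),
            Mhat p * ((∏ i, x ω (p.1 i)) * ∏ i, x ω (p.2 i)))
        - 4 * ε * ‖Matrix.toEuclideanCLM (𝕜 := ℝ) Q‖ :=
  direct_rounding_general n t Mhat hMnonneg Q hQ Ω w hw hw1 x hx ε hhell
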